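/- arXiv:1705.04978 — 11 statements merged into one kernel-verified Lean document; each statement's English description precedes it below -/
import Mathlib

section
/- Let i, k, r, s be positive integers with k > i, and let n ≥ 2k + (k-1)i - 1 be an integer. Then L^i_{r,s}(k,n) = r·L^i_{r,s}(k,n-i) + s·L^i_{r,s}(k,n-k). -/
/-- Auxiliary sequence: `genFibAux i k r s m` equals `F^i_{r,s}(k, m-1)`, i.e. the
four-parameters sequence indexed by `m = n + 1 ≥ 0`.  For `i ≤ k` the initial values
(`-1 ≤ n ≤ k-2`, i.e. `m < k`) are `r^⌊(n+1)/i⌋`, for `k < i` (`m < i`) they are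
`s^⌊(n+1)/k⌋`, and for `n ≥ max{k,i} - 1` the recurrence
`F(n) = r·F(n-i) + s·F(n-k)` holds. -/
def genFibAux (i k r s : ℕ) : ℕ → ℤ
  | m =>
    if m < max (max k i) 1 then
      if i ≤ k then (r : ℤ) ^ (m / i) else (s : ℤ) ^ (m / k)
    else
      r * genFibAux i k r s (m - max i 1) + s * genFibAux i k r s (m - max k 1)
  termination_by m => m
  decreasing_by all_goals omega

/-- The four-parameters sequence `F^i_{r,s}(k,n)` for integer `n ≥ -1`, with the
convention that it vanishes for `n ≤ -2`. -/
def genFib (i k r s : ℕ) (n : ℤ) : ℤ :=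
  if n < -1 then 0 else genFibAux i k r s (n + 1).toNat

/-- The generalized Lucas sequence `L^i_{r,s}(k,n)` (for `k > i`):
`L(n) = F(n)` for `-1 ≤ n ≤ k-2`,
`L(n) = F(n) - r^⌊(n+1)/i⌋` for `k-1 ≤ n ≤ k+(k-1)i-2`, and
`L(n) = r^(k-1)·((k-1)·s·F(n-k-(k-1)i) + F(n-(k-1)i))` for `n ≥ k+(k-1)i-1`. -/
def genLucas (i k r s : ℕ) (n : ℤ) : ℤ :=
  if n ≤ (k : ℤ) - 2 then genFib i k r s n
  else if n ≤ (k : ℤ) + ((k : ℤ) - 1) * i - 2 then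
    genFib i k r s n - (r : ℤ) ^ ((n + 1).toNat / i)
  else
    (r : ℤ) ^ (k - 1) *
      (((k : ℤ) - 1) * s * genFib i k r s (n - k - ((k : ℤ) - 1) * i) +
        genFib i k r s (n - ((k : ℤ) - 1) * i))


theorem genFib_rec (i k r s : ℕ) (hi : 0 < i) (hik : i < k) (n : ℤ)
    (hn : (k : ℤ) - 1 ≤ n) :
    genFib i k r s n = r * genFib i k r s (n - i) + s * genFib i k r s (n - k) := by
  have hk1 : (1:ℤ) ≤ k := by exact_mod_cast hik.le.trans' hi
  unfold genFib
  rw [if_neg (by omega), if_neg (by omega), if_neg (by omega)]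
  rw [genFibAux]
  have hmax : max (max k i) 1 = k := by omega
  have hmaxi : max i 1 = i := by omega
  have hmaxk : max k 1 = k := by omega
  rw [hmax, hmaxi, hmaxk, if_neg (by omega)]
  have t1 : (n - i + 1).toNat = (n + 1).toNat - i := by omega
  have t2 : (n - k + 1).toNat = (n + 1).toNat - k := by omega
  rw [t1, t2]

/-- For positive integers `i, k, r, s` with `k > i` and integer
`n ≥ 2k + (k-1)i - 1`, `L^i_{r,s}(k,n) = r·L^i_{r,s}(k,n-i) + s·L^i_{r,s}(k,n-k)`. -/
theorem genLucas_recurrence (i k r s : ℕ) (hi : 0 < i) (hr : 0 < r) (hs : 0 < s)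
    (hik : i < k) (n : ℤ) (hn : 2 * (k : ℤ) + ((k : ℤ) - 1) * i - 1 ≤ n) :
    genLucas i k r s n =
      r * genLucas i k r s (n - i) + s * genLucas i k r s (n - k) := by
  have hk1 : (1:ℤ) ≤ k := by exact_mod_cast hik.le.trans' hi
  have hi1 : (1:ℤ) ≤ i := by exact_mod_cast hi
  have hki : (i:ℤ) < k := by exact_mod_cast hik
  have hnn : ¬ n ≤ (k:ℤ) + ((k:ℤ)-1) * i - 2 := by nlinarith
  have hni : ¬ n - i ≤ (k:ℤ) + ((k:ℤ)-1) * i - 2 := by nlinarith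
  have hnk : ¬ n - k ≤ (k:ℤ) + ((k:ℤ)-1) * i - 2 := by nlinarith
  unfold genLucas
  rw [if_neg (by nlinarith), if_neg hnn, if_neg (by nlinarith), if_neg hni,
    if_neg (by nlinarith), if_neg hnk]
  have h1 := genFib_rec i k r s hi hik (n - ((k:ℤ)-1)*i) (by nlinarith)
  have h2 := genFib_rec i k r s hi hik (n - k - ((k:ℤ)-1)*i) (by nlinarith)
  have e1 : n - i - ((k:ℤ)-1)*i = n - ((k:ℤ)-1)*i - i := by ring
  have e2 : n - k - ((k:ℤ)-1)*i = n - ((k:ℤ)-1)*i - k := by ring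
  have e3 : n - i - k - ((k:ℤ)-1)*i = n - k - ((k:ℤ)-1)*i - i := by ring
  have e4 : n - k - k - ((k:ℤ)-1)*i = n - k - ((k:ℤ)-1)*i - k := by ring
  rw [e1, e3, e4, h1, ← e2, h2]
  ring
end

section
/- Let i, k, r, s be positive integers with k ≥ i, and let n ≥ -1 be an integer. Then F^i_{r,s}(k,n) = ∑_{j=0}^{⌊(n+1)/k⌋} r^{⌊(n+1-jk)/i⌋} · s^j · C(j + ⌊(n+1-jk)/i⌋, j), where C(a,b) denotes the binomial coefficient. -/
lemma genFibAux_closed (i k r s : ℕ) (hi : 0 < i) (hik : i ≤ k) (m : ℕ) :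
    genFibAux i k r s m =
      ∑ j ∈ Finset.range (m / k + 1),
        (r : ℤ) ^ ((m - j * k) / i) * (s : ℤ) ^ j *
          Nat.choose (j + (m - j * k) / i) j := by
  induction m using Nat.strong_induction_on with
  | _ m ih =>
  have hk : 0 < k := lt_of_lt_of_le hi hik
  rw [genFibAux]
  have h1 : max (max k i) 1 = k := by omega
  have h2 : max i 1 = i := by omega
  have h3 : max k 1 = k := by omega
  rw [h1, h2, h3, if_pos hik]
  by_cases hm : m < k
  · rw [if_pos hm, Nat.div_eq_of_lt hm]
    simp
  · rw [if_neg hm]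
    push_neg at hm
    rw [ih (m - i) (by omega), ih (m - k) (by omega)]
    set N := m / k with hN
    have hN1 : 1 ≤ N := (Nat.one_le_div_iff hk).mpr hm
    have hmk : (m - k) / k = N - 1 := by
      have := Nat.div_eq_sub_div hk hm
      omega
    set A := (m - i) / k with hA
    have hAN : A ≤ N := Nat.div_le_div_right (Nat.sub_le _ _)
    -- termwise split of the RHS
    have split : ∀ j ∈ Finset.range (N + 1),
        (r : ℤ) ^ ((m - j * k) / i) * (s : ℤ) ^ j *
            Nat.choose (j + (m - j * k) / i) j =
          (if j ≤ A then
            (r : ℤ) * ((r : ℤ) ^ ((m - i - j * k) / i) * (s : ℤ) ^ j *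
              Nat.choose (j + (m - i - j * k) / i) j) else 0) +
          (if 1 ≤ j then
            (s : ℤ) * ((r : ℤ) ^ ((m - k - (j - 1) * k) / i) * (s : ℤ) ^ (j - 1) *
              Nat.choose ((j - 1) + (m - k - (j - 1) * k) / i) (j - 1)) else 0) := by
      intro j hj
      simp only [Finset.mem_range] at hj
      have hjN : j ≤ N := by omega
      have hjkm : j * k ≤ m := (Nat.le_div_iff_mul_le hk).mp hjN
      match j with
      | 0 =>
        simp only [zero_le, if_pos, if_neg (by omega : ¬ (1 ≤ 0))]
        have him : i ≤ m := le_trans hik hm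
        have e0 : m / i = (m - i) / i + 1 := by
          have := Nat.div_eq_sub_div hi him
          omega
        simp [e0, pow_succ]
        ring
      | j' + 1 =>
        have hjk' : (j' + 1) * k = j' * k + k := by ring
        by_cases hjA : j' + 1 ≤ A
        · rw [if_pos hjA, if_pos (by omega)]
          simp only [Nat.add_sub_cancel]
          have hjk : (j' + 1) * k ≤ m - i := (Nat.le_div_iff_mul_le hk).mp hjA
          have ha : i ≤ m - (j' + 1) * k := by omega
          have e1 : m - i - (j' + 1) * k = m - (j' + 1) * k - i := by omega
          have e2 : m - k - j' * k = m - (j' + 1) * k := by omega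
          rw [e1, e2]
          have ha1 : 1 ≤ (m - (j' + 1) * k) / i := (Nat.one_le_div_iff hi).mpr ha
          obtain ⟨a', ha'⟩ : ∃ a', (m - (j' + 1) * k) / i = a' + 1 :=
            ⟨(m - (j' + 1) * k) / i - 1, by omega⟩
          have e3 : (m - (j' + 1) * k - i) / i = a' := by
            have := Nat.div_eq_sub_div hi ha
            omega
          rw [ha', e3]
          have pascal : (j' + 1 + (a' + 1)).choose (j' + 1) =
              (j' + (a' + 1)).choose j' + (j' + (a' + 1)).choose (j' + 1) := by
            rw [show j' + 1 + (a' + 1) = (j' + (a' + 1)) + 1 by omega]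
            exact Nat.choose_succ_succ _ _
          rw [pascal, show j' + 1 + a' = j' + (a' + 1) by omega]
          push_cast
          ring
        · rw [if_neg hjA, if_pos (by omega)]
          simp only [Nat.add_sub_cancel]
          have hjk : m - i < (j' + 1) * k := (Nat.div_lt_iff_lt_mul hk).mp (by omega)
          have him : i ≤ m := le_trans hik hm
          have ha : m - (j' + 1) * k < i := by omega
          have e2 : m - k - j' * k = m - (j' + 1) * k := by omega
          rw [e2, Nat.div_eq_of_lt ha]
          simp [pow_succ]
          ring
    rw [Finset.sum_congr rfl split, Finset.sum_add_distrib]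
    congr 1
    · rw [Finset.mul_sum]
      rw [← Finset.sum_subset (Finset.range_subset_range.mpr (by omega : A + 1 ≤ N + 1))
        (fun x hx hxs => by
          rw [if_neg]
          simp only [Finset.mem_range] at hx hxs
          omega)]
      exact Finset.sum_congr rfl fun j hj => by
        rw [if_pos]
        simp only [Finset.mem_range] at hj
        omega
    · rw [Finset.mul_sum, hmk, show N - 1 + 1 = N by omega, Finset.sum_range_succ']
      rw [if_neg (by omega : ¬ (1 : ℕ) ≤ 0), add_zero]
      exact Finset.sum_congr rfl fun j _ => by
        rw [if_pos (by omega : 1 ≤ j + 1)]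
        simp

/-- For positive integers `i, k, r, s` with `k ≥ i` and integer
`n ≥ -1`,
`F^i_{r,s}(k,n) = ∑_{j=0}^{⌊(n+1)/k⌋} r^⌊(n+1-jk)/i⌋ · s^j · C(j + ⌊(n+1-jk)/i⌋, j)`. -/
theorem genFib_closed_formula (i k r s : ℕ) (hi : 0 < i) (hk : 0 < k) (hr : 0 < r)
    (hs : 0 < s) (hik : i ≤ k) (n : ℤ) (hn : -1 ≤ n) :
    genFib i k r s n =
      ∑ j ∈ Finset.range ((n + 1).toNat / k + 1),
        (r : ℤ) ^ (((n + 1).toNat - j * k) / i) * (s : ℤ) ^ j *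
          Nat.choose (j + ((n + 1).toNat - j * k) / i) j := by
  rw [genFib, if_neg (by omega)]
  exact genFibAux_closed i k r s hi hik _
end

section
/- For every integer n ≥ 1, the Narayana number u_n satisfies u_n = ∑_{j=0}^{⌊n/3⌋} C(n-2j, j), where C(a,b) denotes the binomial coefficient. -/
/-- The Narayana numbers: `u_0 = u_1 = u_2 = 1` and `u_n = u_{n-1} + u_{n-3}` for `n ≥ 3`. -/
def narayana : ℕ → ℕ
  | 0 => 1
  | 1 => 1
  | 2 => 1
  | n + 3 => narayana (n + 2) + narayana n

private lemma splitA (a m : ℕ) (h : ∀ i < m, 2 * i ≤ a) :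
    ∑ j ∈ Finset.range (m + 1), (a + 3 - 2 * j).choose j
      = 1 + (∑ i ∈ Finset.range m, (a - 2 * i).choose i
          + ∑ i ∈ Finset.range m, (a - 2 * i).choose (i + 1)) := by
  rw [Finset.sum_range_succ']
  have : ∀ i ∈ Finset.range m, (a + 3 - 2 * (i + 1)).choose (i + 1)
      = (a - 2 * i).choose i + (a - 2 * i).choose (i + 1) := by
    intro i hi
    have h2 : 2 * i ≤ a := h i (Finset.mem_range.mp hi)
    have : a + 3 - 2 * (i + 1) = (a - 2 * i) + 1 := by omega
    rw [this, Nat.choose_succ_succ]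
  rw [Finset.sum_congr rfl this, Finset.sum_add_distrib]
  simp [add_comm]

private lemma splitB (a m : ℕ) :
    ∑ j ∈ Finset.range (m + 1), (a + 2 - 2 * j).choose j
      = 1 + ∑ i ∈ Finset.range m, (a - 2 * i).choose (i + 1) := by
  rw [Finset.sum_range_succ']
  have : ∀ i ∈ Finset.range m, (a + 2 - 2 * (i + 1)).choose (i + 1)
      = (a - 2 * i).choose (i + 1) := by
    intro i _
    congr 1
    omega
  rw [Finset.sum_congr rfl this]
  simp [add_comm]

private lemma key (n : ℕ) :
    ∑ j ∈ Finset.range ((n + 3) / 3 + 1), (n + 3 - 2 * j).choose j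
      = ∑ j ∈ Finset.range ((n + 2) / 3 + 1), (n + 2 - 2 * j).choose j
        + ∑ j ∈ Finset.range (n / 3 + 1), (n - 2 * j).choose j := by
  obtain ⟨k, hk | hk | hk⟩ : ∃ k, n = 3 * k ∨ n = 3 * k + 1 ∨ n = 3 * k + 2 :=
    ⟨n / 3, by omega⟩ <;> subst hk
  · have e1 : (3 * k + 3) / 3 + 1 = (k + 1) + 1 := by omega
    have e2 : (3 * k + 2) / 3 + 1 = k + 1 := by omega
    have e3 : 3 * k / 3 + 1 = k + 1 := by omega
    rw [e1, e2, e3, splitA (3 * k) (k + 1) (by omega), splitB (3 * k) k,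
      Finset.sum_range_succ (fun i => (3 * k - 2 * i).choose (i + 1)) k]
    have : (3 * k - 2 * k).choose (k + 1) = 0 := Nat.choose_eq_zero_of_lt (by omega)
    rw [this]
    ring
  · have e1 : (3 * k + 1 + 3) / 3 + 1 = (k + 1) + 1 := by omega
    have e2 : (3 * k + 1 + 2) / 3 + 1 = (k + 1) + 1 := by omega
    have e3 : (3 * k + 1) / 3 + 1 = k + 1 := by omega
    rw [e1, e2, e3, show 3 * k + 1 + 3 = (3 * k + 1) + 3 from rfl,
      show 3 * k + 1 + 2 = (3 * k + 1) + 2 from rfl,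
      splitA (3 * k + 1) (k + 1) (by omega), splitB (3 * k + 1) (k + 1)]
    ring
  · have e1 : (3 * k + 2 + 3) / 3 + 1 = (k + 1) + 1 := by omega
    have e2 : (3 * k + 2 + 2) / 3 + 1 = (k + 1) + 1 := by omega
    have e3 : (3 * k + 2) / 3 + 1 = k + 1 := by omega
    rw [e1, e2, e3, show 3 * k + 2 + 3 = (3 * k + 2) + 3 from rfl,
      show 3 * k + 2 + 2 = (3 * k + 2) + 2 from rfl,
      splitA (3 * k + 2) (k + 1) (by omega), splitB (3 * k + 2) (k + 1)]
    ring

private lemma aux : ∀ n, narayana n = ∑ j ∈ Finset.range (n / 3 + 1), (n - 2 * j).choose j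
  | 0 => by decide
  | 1 => by decide
  | 2 => by decide
  | n + 3 => by
    rw [narayana, aux (n + 2), aux n, key]

/-- For every integer `n ≥ 1`,
`u_n = ∑_{j=0}^{⌊n/3⌋} C(n - 2j, j)`. -/
theorem narayana_closed_formula (n : ℕ) (hn : 1 ≤ n) :
    narayana n = ∑ j ∈ Finset.range (n / 3 + 1), Nat.choose (n - 2 * j) j := by
  exact aux n
end

section
/- Let i ≥ 2, t ≥ 1, and n ≥ 0 be integers, let k = t·i, and let r, s be positive integers. Then F^i_{r,s}(k, ni-1) = F^i_{r,s}(k, ni). -/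
lemma genFibAux_key (i t r s : ℕ) (hi : 2 ≤ i) (ht : 1 ≤ t) :
    ∀ N : ℕ, genFibAux i (t * i) r s (N * i) = genFibAux i (t * i) r s (N * i + 1) := by
  intro N
  induction N using Nat.strong_induction_on with
  | _ N IH =>
    have hk : i ≤ t * i := Nat.le_mul_of_pos_left i ht
    have hmax : max (max (t * i) i) 1 = t * i := by omega
    have hmi : max i 1 = i := by omega
    have hmk : max (t * i) 1 = t * i := by omega
    conv_lhs => rw [genFibAux]
    conv_rhs => rw [genFibAux]
    rw [hmax, hmi, hmk]
    by_cases h : N * i < t * i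
    · have hN : N < t := by
        by_contra hc
        exact absurd (Nat.mul_le_mul_right i (not_lt.1 hc)) (not_le.2 h)
      have h1 : N * i + 1 < t * i := by nlinarith
      rw [if_pos h, if_pos h1, if_pos hk, if_pos hk]
      have e1 : N * i / i = N := Nat.mul_div_cancel N (by omega)
      have e2 : (N * i + 1) / i = N := by
        rw [add_comm, Nat.add_mul_div_right _ _ (by omega : 0 < i),
          Nat.div_eq_of_lt (by omega), Nat.zero_add]
      rw [e1, e2]
    · have hNt : t ≤ N := Nat.le_of_mul_le_mul_right (not_lt.1 h) (by omega)
      have h1 : ¬ (N * i + 1 < t * i) := by omega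
      rw [if_neg h, if_neg h1]
      have e1 : N * i - i = (N - 1) * i := by
        have : 1 ≤ N := le_trans ht hNt
        rw [Nat.sub_mul, one_mul]
      have e2 : N * i - t * i = (N - t) * i := by rw [Nat.sub_mul]
      have e3 : N * i + 1 - i = (N - 1) * i + 1 := by
        have : 1 ≤ N := le_trans ht hNt
        rw [Nat.sub_mul, one_mul]
        omega
      have e4 : N * i + 1 - t * i = (N - t) * i + 1 := by
        rw [Nat.sub_mul]
        have := Nat.mul_le_mul_right i hNt
        omega
      rw [e1, e2, e3, e4, IH (N - 1) (by omega), IH (N - t) (by omega)]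

/-- For integers `i ≥ 2`, `t ≥ 1`, `n ≥ 0`, `k = t·i`, and positive
integers `r, s`, `F^i_{r,s}(k, ni-1) = F^i_{r,s}(k, ni)`. -/
theorem genFib_black_square (i t r s : ℕ) (hi : 2 ≤ i) (ht : 1 ≤ t) (hr : 0 < r)
    (hs : 0 < s) (n : ℤ) (hn : 0 ≤ n) :
    genFib i (t * i) r s (n * i - 1) = genFib i (t * i) r s (n * i) := by
  have hni : 0 ≤ n * i := mul_nonneg hn (by positivity)
  rw [genFib, genFib, if_neg (by omega), if_neg (by omega)]
  have e0 : (n * (i:ℤ)).toNat = n.toNat * i := by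
    conv_lhs => rw [← Int.toNat_of_nonneg hn]
    rw [← Nat.cast_mul, Int.toNat_natCast]
  have e1 : (n * i - 1 + 1).toNat = n.toNat * i := by omega
  have e2 : (n * i + 1).toNat = n.toNat * i + 1 := by omega
  rw [e1, e2]
  exact genFibAux_key i t r s hi ht n.toNat
end

section
/- Let i, k, r, s be positive integers and n ≥ 0 an integer. If i = 1, then F^1_{r,s}(k, n+k) = r^{n+k+1} + ∑_{j=-1}^{n} r^{n-j}·s·F^1_{r,s}(k, j). If i ≥ 2, then F^i_{r,s}(k, ni+k) = u(k,i) + ∑_{j=0}^{n} r^{n-j}·s·F^i_{r,s}(k, ij), where u(k,i) = r^{⌊(ni+k+1)/i⌋} if k ≥ i, u(k,i) = r^{n+1} if i = k+1, and u(k,i) = 0 if i ≥ k+2. -/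
open Finset

theorem eq_pow_mul_add_sum_of_succ_eq_mul_add {R : Type*} [CommSemiring R] {a b : ℕ → R}
    {r u : R} (h₀ : a 0 = u + b 0) (hsucc : ∀ t, a (t + 1) = r * a t + b (t + 1)) (n : ℕ) :
    a n = r ^ n * u + ∑ j ∈ range (n + 1), r ^ (n - j) * b j := by
  induction n with
  | zero => simp [h₀]
  | succ n ih =>
    have hpow : ∀ j ∈ range (n + 1), r * (r ^ (n - j) * b j) = r ^ (n + 1 - j) * b j := by
      intro j hj
      rw [Nat.sub_add_comm (mem_range_succ_iff.mp hj), pow_succ']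
      ring
    rw [hsucc, ih, sum_range_succ _ (n + 1), mul_add, mul_sum, sum_congr rfl hpow,
      Nat.sub_self, pow_zero, one_mul, pow_succ']
    ring

section GenFib

variable {i k : ℕ} (r s : ℕ)

theorem genFibAux_of_lt {m : ℕ} (h : m < max (max k i) 1) :
    genFibAux i k r s m = if i ≤ k then (r : ℤ) ^ (m / i) else (s : ℤ) ^ (m / k) := by
  rw [genFibAux, if_pos h]

theorem genFibAux_of_le (hi : 0 < i) (hk : 0 < k) {m : ℕ} (h : max k i ≤ m) :
    genFibAux i k r s m = r * genFibAux i k r s (m - i) + s * genFibAux i k r s (m - k) := by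
  rw [genFibAux, if_neg (by omega), Nat.max_eq_left hi, Nat.max_eq_left hk]

theorem genFibAux_one_add (hk : 0 < k) (n : ℕ) :
    genFibAux 1 k r s (n + k) = (r : ℤ) ^ (n + k) +
      ∑ j ∈ range (n + 1), (r : ℤ) ^ (n - j) * s * genFibAux 1 k r s j := by
  have h₀ : genFibAux 1 k r s (0 + k) = (r : ℤ) ^ k + s * genFibAux 1 k r s 0 := by
    rw [Nat.zero_add, genFibAux_of_le r s one_pos hk (by omega), genFibAux_of_lt r s (by omega),
      if_pos (show 1 ≤ k from hk), Nat.div_one, ← pow_succ',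
      Nat.sub_add_cancel (show 1 ≤ k from hk), Nat.sub_self]
  have hsucc (t : ℕ) : genFibAux 1 k r s (t + 1 + k) =
      r * genFibAux 1 k r s (t + k) + s * genFibAux 1 k r s (t + 1) := by
    rw [genFibAux_of_le r s one_pos hk (by omega), Nat.add_sub_cancel,
      Nat.add_right_comm, Nat.add_sub_cancel]
  simp_rw [eq_pow_mul_add_sum_of_succ_eq_mul_add (a := fun t ↦ genFibAux 1 k r s (t + k))
    (b := fun j ↦ s * genFibAux 1 k r s j) h₀ hsucc, pow_add, mul_assoc]

theorem genFibAux_succ_of_two_le (hi : 2 ≤ i) (hk : 0 < k) :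
    genFibAux i k r s (k + 1) =
      (if i ≤ k then (r : ℤ) ^ ((k + 1) / i) else if i = k + 1 then (r : ℤ) else 0) +
        s * genFibAux i k r s 1 := by
  split_ifs with hik hik'
  · rw [genFibAux_of_le r s (by omega) hk (by omega), Nat.add_sub_cancel_left,
      genFibAux_of_lt r s (m := k + 1 - i) (by omega), if_pos hik, ← pow_succ',
      ← Nat.div_eq_sub_div (by omega) (by omega)]
  · rw [genFibAux_of_le r s (by omega) hk (by omega), hik', Nat.sub_self, Nat.add_sub_cancel_left,
      genFibAux_of_lt r s (m := 0) (by omega), if_neg (by omega), Nat.zero_div, pow_zero, mul_one]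
  · rw [genFibAux_of_lt r s (m := k + 1) (by omega), genFibAux_of_lt r s (m := 1) (by omega),
      if_neg hik, if_neg hik, Nat.add_div_left 1 hk, pow_succ']
    ring

theorem genFibAux_mul_add_succ (hi : 2 ≤ i) (hk : 0 < k) (n : ℕ) :
    genFibAux i k r s (n * i + k + 1) =
      (if i ≤ k then (r : ℤ) ^ ((n * i + k + 1) / i)
        else if i = k + 1 then (r : ℤ) ^ (n + 1) else 0) +
      ∑ j ∈ range (n + 1), (r : ℤ) ^ (n - j) * s * genFibAux i k r s (j * i + 1) := by
  have h₀ : genFibAux i k r s (0 * i + k + 1) =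
      (if i ≤ k then (r : ℤ) ^ ((k + 1) / i) else if i = k + 1 then (r : ℤ) else 0) +
        s * genFibAux i k r s (0 * i + 1) := by
    simpa only [Nat.zero_mul, Nat.zero_add] using genFibAux_succ_of_two_le r s hi hk
  have hsucc (t : ℕ) : genFibAux i k r s ((t + 1) * i + k + 1) =
      r * genFibAux i k r s (t * i + k + 1) + s * genFibAux i k r s ((t + 1) * i + 1) := by
    have hm : (t + 1) * i + k + 1 = t * i + k + 1 + i := by ring
    rw [genFibAux_of_le r s (by omega) hk (by omega), hm, Nat.add_sub_cancel, ← hm,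
      show (t + 1) * i + k + 1 - k = (t + 1) * i + 1 by omega]
  have hu : (r : ℤ) ^ n *
      (if i ≤ k then (r : ℤ) ^ ((k + 1) / i) else if i = k + 1 then (r : ℤ) else 0) =
      if i ≤ k then (r : ℤ) ^ ((n * i + k + 1) / i)
        else if i = k + 1 then (r : ℤ) ^ (n + 1) else 0 := by
    split_ifs
    · rw [← pow_add, show n * i + k + 1 = k + 1 + n * i by ring,
        Nat.add_mul_div_right _ _ (by omega), add_comm]
    · exact (pow_succ _ _).symm
    · exact mul_zero _
  rw [eq_pow_mul_add_sum_of_succ_eq_mul_add (a := fun t ↦ genFibAux i k r s (t * i + k + 1))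
    (b := fun j ↦ s * genFibAux i k r s (j * i + 1)) h₀ hsucc, hu]
  simp only [mul_assoc]

theorem genFib_natCast (m : ℕ) : genFib i k r s m = genFibAux i k r s (m + 1) := by
  rw [genFib, if_neg (by omega), Int.toNat_natCast_add_one]

theorem genFib_natCast_sub_one (m : ℕ) : genFib i k r s (m - 1) = genFibAux i k r s m := by
  rw [genFib, if_neg (by omega), sub_add_cancel, Int.toNat_natCast]

end GenFib

theorem sum_Icc_neg_one_eq_sum_range {M : Type*} [AddCommMonoid M] (f : ℤ → M) (n : ℕ) :
    ∑ j ∈ Icc (-1 : ℤ) n, f j = ∑ m ∈ range (n + 2), f (m - 1) := by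
  rw [Int.Icc_eq_finset_map, sum_map, show ((n : ℤ) + 1 - -1).toNat = n + 2 by omega]
  simp only [Function.Embedding.trans_apply, Nat.castEmbedding_apply, addLeftEmbedding_apply,
    neg_add_eq_sub]

theorem genFib_sum_identity_general (i k r s : ℕ) (hk : 0 < k) (n : ℕ) :
    (i = 1 →
      genFib 1 k r s ((n : ℤ) + k) =
        (r : ℤ) ^ (n + k + 1) +
          ∑ j ∈ Finset.Icc (-1 : ℤ) (n : ℤ),
            (r : ℤ) ^ ((n : ℤ) - j).toNat * s * genFib 1 k r s j) ∧
    (2 ≤ i →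
      genFib i k r s ((n : ℤ) * i + k) =
        (if i ≤ k then (r : ℤ) ^ ((n * i + k + 1) / i)
          else if i = k + 1 then (r : ℤ) ^ (n + 1) else 0) +
          ∑ j ∈ Finset.range (n + 1),
            (r : ℤ) ^ (n - j) * s * genFib i k r s ((j : ℤ) * i)) := by
  refine ⟨fun _ ↦ ?_, fun hi ↦ ?_⟩
  · have h := genFibAux_one_add r s hk (n + 1)
    rw [Nat.add_right_comm] at h
    rw [← Nat.cast_add, genFib_natCast, h, sum_Icc_neg_one_eq_sum_range]
    refine congrArg _ (sum_congr rfl fun m hm ↦ ?_)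
    rw [genFib_natCast_sub_one, show ((n : ℤ) - (m - 1)).toNat = n + 1 - m by
      have := mem_range.mp hm; omega]
  · rw [← Nat.cast_mul, ← Nat.cast_add, genFib_natCast, genFibAux_mul_add_succ r s hi hk]
    simp only [← Nat.cast_mul, genFib_natCast]

/-- For positive integers `i, k, r, s` and integer `n ≥ 0`:
if `i = 1` then `F^1_{r,s}(k, n+k) = r^{n+k+1} + ∑_{j=-1}^{n} r^{n-j}·s·F^1_{r,s}(k, j)`;
if `i ≥ 2` then `F^i_{r,s}(k, ni+k) = u(k,i) + ∑_{j=0}^{n} r^{n-j}·s·F^i_{r,s}(k, ij)`,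
where `u(k,i) = r^⌊(ni+k+1)/i⌋` if `k ≥ i`, `u(k,i) = r^{n+1}` if `i = k+1`, and
`u(k,i) = 0` if `i ≥ k+2`. -/
theorem genFib_sum_identity (i k r s : ℕ) (hi : 0 < i) (hk : 0 < k) (hr : 0 < r)
    (hs : 0 < s) (n : ℕ) :
    (i = 1 →
      genFib 1 k r s ((n : ℤ) + k) =
        (r : ℤ) ^ (n + k + 1) +
          ∑ j ∈ Finset.Icc (-1 : ℤ) (n : ℤ),
            (r : ℤ) ^ ((n : ℤ) - j).toNat * s * genFib 1 k r s j) ∧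
    (2 ≤ i →
      genFib i k r s ((n : ℤ) * i + k) =
        (if i ≤ k then (r : ℤ) ^ ((n * i + k + 1) / i)
          else if i = k + 1 then (r : ℤ) ^ (n + 1) else 0) +
          ∑ j ∈ Finset.range (n + 1),
            (r : ℤ) ^ (n - j) * s * genFib i k r s ((j : ℤ) * i)) :=
  genFib_sum_identity_general i k r s hk n
end

section
/- Let t ≥ 1 and n ≥ 2t-1 be integers and let r, s be positive integers. Then F^1_{r,s}(2t, 2n) = ∑ r^{2n+1-2t(j+l)} · s^{j+l} · C(n - t(j+l) + j, j) · C(n - t(j+l) + l, l), where the sum ranges over all pairs of nonnegative integers (j, l) with t(j+l) ≤ n, and C(a,b) denotes the binomial coefficient. -/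
section AuxProof
open Finset

private lemma vand : ∀ (a b m : ℕ),
    ∑ j ∈ range (m+1), (a+j).choose j * (b + (m-j)).choose (m-j)
      = (a+b+m+1).choose m := by
  intro a
  induction a with
  | zero =>
    intro b m
    have h1 : ∀ j ∈ range (m+1), (0+j).choose j * (b+(m-j)).choose (m-j)
        = (fun l => (l+b).choose b) (m-j) := by
      intro j hj
      simp only [zero_add, Nat.choose_self, one_mul]
      rw [add_comm b (m-j)]
      rw [← Nat.choose_symm (Nat.le_add_left b (m-j))]
      congr 1
      omega
    rw [Finset.sum_congr rfl h1]
    have h2 : ∀ j ∈ range (m+1), (fun l => (l+b).choose b) (m-j) = (fun l => (l+b).choose b) (m+1-1-j) := by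
      intro j hj; congr 1
    rw [Finset.sum_congr rfl h2, Finset.sum_range_reflect (fun l => (l+b).choose b) (m+1)]
    rw [Nat.sum_range_add_choose m b]
    rw [← Nat.choose_symm (by omega : b+1 ≤ m+b+1)]
    congr 1 <;> omega
  | succ a ih =>
    intro b m
    induction m with
    | zero => simp
    | succ m ihm =>
      rw [Finset.sum_range_succ']
      have key : ∀ i ∈ range (m+1),
          (a+1+(i+1)).choose (i+1) * (b + (m+1-(i+1))).choose (m+1-(i+1))
          = (a+1+i).choose i * (b + (m-i)).choose (m-i)
            + (a+(i+1)).choose (i+1) * (b + (m+1-(i+1))).choose (m+1-(i+1)) := by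
        intro i hi
        have e1 : a+1+(i+1) = (a+1+i)+1 := by omega
        have e2 : m+1-(i+1) = m-i := by omega
        rw [e1, Nat.choose_succ_succ', e2]
        have e3 : a+1+i = a+(i+1) := by omega
        rw [e3]
        ring
      rw [Finset.sum_congr rfl key, Finset.sum_add_distrib, ihm]
      have h5 : ∑ i ∈ range (m+1), (a+(i+1)).choose (i+1) * (b + (m+1-(i+1))).choose (m+1-(i+1))
          + (a+0).choose 0 * (b+(m+1-0)).choose (m+1-0) = (a+b+(m+1)+1).choose (m+1) := by
        rw [← Finset.sum_range_succ' (fun j => (a+j).choose j * (b + (m+1-j)).choose (m+1-j)) (m+1)]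
        exact ih b (m+1)
      rw [show a+1+b+(m+1)+1 = (a+b+m+2)+1 from by omega, Nat.choose_succ_succ']
      rw [show a+1+b+m+1 = a+b+m+2 from by omega]
      rw [show a+b+(m+1)+1 = a+b+m+2 from by omega] at h5
      simp only [Nat.choose_zero_right, one_mul] at h5 ⊢
      omega

def Tform (k r s m : ℕ) : ℤ :=
  ∑ j ∈ range (m+1),
    if k*j ≤ m then (r:ℤ)^(m - k*j) * (s:ℤ)^j * ((m - (k-1)*j).choose j : ℤ) else 0

lemma Tform_init (k r s m : ℕ) (hk : 2 ≤ k) (hm : m < k) : Tform k r s m = (r:ℤ)^m := by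
  unfold Tform
  rw [Finset.sum_eq_single 0]
  · simp
  · intro j hj hj0
    have : ¬ (k*j ≤ m) := by
      have h1 : k ≤ k * j := Nat.le_mul_of_pos_right k (by omega)
      omega
    simp [this]
  · intro h; simp at h

lemma Tform_rec (k r s m : ℕ) (hk : 2 ≤ k) (hm : k ≤ m) :
    Tform k r s m = r * Tform k r s (m-1) + s * Tform k r s (m-k) := by
  have split : ∀ j, (if k*j ≤ m then (r:ℤ)^(m - k*j) * (s:ℤ)^j * ((m - (k-1)*j).choose j : ℤ) else 0)
      = (if k*j ≤ m then (r:ℤ)^(m - k*j) * (s:ℤ)^j * ((m - (k-1)*j - 1).choose j : ℤ) else 0)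
        + (if k*j ≤ m ∧ 1 ≤ j then (r:ℤ)^(m - k*j) * (s:ℤ)^j * ((m - (k-1)*j - 1).choose (j-1) : ℤ) else 0) := by
    intro j
    by_cases h : k*j ≤ m
    · rcases Nat.eq_zero_or_pos j with rfl | hj
      · simp
      · have hja : j ≤ k * j := Nat.le_mul_of_pos_left j (by omega)
        have hkj : (k-1)*j = k*j - j := by rw [Nat.sub_mul, one_mul]
        obtain ⟨N, hN⟩ : ∃ N, m - (k-1)*j = N + 1 := ⟨m - (k-1)*j - 1, by omega⟩
        obtain ⟨J, hJ⟩ : ∃ J, j = J + 1 := ⟨j - 1, by omega⟩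
        have hN1 : m - (k-1)*j - 1 = N := by omega
        rw [if_pos h, if_pos h, if_pos (show k*j ≤ m ∧ 1 ≤ j from ⟨h, hj⟩), ← mul_add]
        congr 1
        rw [hN, hJ]
        simp only [Nat.add_sub_cancel]
        rw [Nat.choose_succ_succ']
        push_cast
        ring
    · simp [h]
  unfold Tform
  rw [Finset.sum_congr rfl (fun j _ => split j), Finset.sum_add_distrib]
  congr 1
  · -- A part = r * Tform (m-1)
    rw [Finset.mul_sum, Finset.sum_range_succ]
    have hAm : (if k*m ≤ m then (r:ℤ)^(m - k*m) * (s:ℤ)^m * ((m - (k-1)*m - 1).choose m : ℤ) else 0) = 0 := by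
      have : ¬ k*m ≤ m := by nlinarith
      simp [this]
    rw [hAm, add_zero, show m - 1 + 1 = m from by omega]
    apply Finset.sum_congr rfl
    intro j hj
    have hja : j ≤ k * j := Nat.le_mul_of_pos_left j (by omega)
    have hkj : (k-1)*j = k*j - j := by rw [Nat.sub_mul, one_mul]
    by_cases h1 : k*j ≤ m - 1
    · have h2 : k*j ≤ m := by omega
      have e1 : m - k*j = (m - 1 - k*j) + 1 := by omega
      have e2 : m - (k-1)*j - 1 = m - 1 - (k-1)*j := by omega
      simp only [h1, h2, if_true, e2]
      rw [e1, pow_succ]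
      ring
    · by_cases h2 : k*j ≤ m
      · have e3 : k * j = m := by omega
        have e4 : m - (k-1)*j - 1 = j - 1 := by omega
        have hjpos : 1 ≤ j := by
          rcases Nat.eq_zero_or_pos j with rfl | h; · simp at e3; omega
          exact h
        simp only [h1, h2, if_true, if_false, e4, mul_zero]
        rw [Nat.choose_eq_zero_of_lt (by omega : j - 1 < j)]
        simp
      · simp [h1, h2]
  · -- B part = s * Tform (m-k)
    rw [Finset.mul_sum, Finset.sum_range_succ']
    have hB0 : (if k*0 ≤ m ∧ 1 ≤ 0 then (r:ℤ)^(m - k*0) * (s:ℤ)^(0:ℕ) * ((m - (k-1)*0 - 1).choose (0-1) : ℤ) else 0) = 0 := by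
      simp
    rw [hB0, add_zero]
    have hsub : range (m - k + 1) ⊆ range m := by
      apply Finset.range_subset_range.2; omega
    rw [Finset.sum_subset hsub (by
      intro i hi hni
      simp only [Finset.mem_range] at hi hni
      have : ¬ k*i ≤ m - k := by
        have : i ≤ k * i := Nat.le_mul_of_pos_left i (by omega)
        omega
      simp [this])]
    apply Finset.sum_congr rfl
    intro i hi
    have hja : i ≤ k * i := Nat.le_mul_of_pos_left i (by omega)
    have hmul : k*(i+1) = k*i + k := by ring
    by_cases h : k*i ≤ m - k
    · have h2 : k*(i+1) ≤ m := by omega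
      have e1 : m - k*(i+1) = m - k - k*i := by omega
      have e2 : m - (k-1)*(i+1) - 1 = m - k - (k-1)*i := by
        have a1 : (k-1)*(i+1) = k*(i+1) - (i+1) := by rw [Nat.sub_mul, one_mul]
        have a2 : (k-1)*i = k*i - i := by rw [Nat.sub_mul, one_mul]
        omega
      have e3 : i + 1 - 1 = i := by omega
      simp only [h, h2, if_true, and_true, true_and, e1, e2, e3, Nat.le_add_left, if_pos (by omega : 1 ≤ i + 1)]
      rw [pow_succ]
      ring
    · have h2 : ¬ (k*(i+1) ≤ m) := by omega
      simp [h, h2]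

lemma genFibAux_eq_Tform (k r s : ℕ) (hk : 2 ≤ k) : ∀ m, genFibAux 1 k r s m = Tform k r s m := by
  intro m
  induction m using Nat.strong_induction_on with
  | _ m ih =>
    rw [genFibAux]
    have h1 : max (max k 1) 1 = k := by omega
    have h2 : max (1:ℕ) 1 = 1 := by omega
    have h3 : max k 1 = k := by omega
    rw [h1, h2, h3]
    by_cases h : m < k
    · rw [if_pos h, if_pos (by omega : 1 ≤ k), Nat.div_one, Tform_init k r s m hk h]
    · rw [if_neg h, ih (m-1) (by omega), ih (m-k) (by omega),
        ← Tform_rec k r s m hk (by omega)]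


/-- For integers `t ≥ 1`, `n ≥ 2t-1`, and positive integers `r, s`,
`F^1_{r,s}(2t, 2n) = ∑_{(j,l) : t(j+l) ≤ n} r^{2n+1-2t(j+l)} · s^{j+l} · C(n-t(j+l)+j, j) · C(n-t(j+l)+l, l)`. -/
theorem genFib_central_square (t r s : ℕ) (ht : 1 ≤ t) (hr : 0 < r) (hs : 0 < s)
    (n : ℕ) (hn : 2 * t - 1 ≤ n) :
    genFib 1 (2 * t) r s (2 * (n : ℤ)) =
      ∑ p ∈ (Finset.range (n + 1) ×ˢ Finset.range (n + 1)).filter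
          (fun p => t * (p.1 + p.2) ≤ n),
        (r : ℤ) ^ (2 * n + 1 - 2 * t * (p.1 + p.2)) * (s : ℤ) ^ (p.1 + p.2) *
          Nat.choose (n - t * (p.1 + p.2) + p.1) p.1 *
          Nat.choose (n - t * (p.1 + p.2) + p.2) p.2 := by
  have hk : 2 ≤ 2*t := by omega
  have h0 : ¬ ((2*(n:ℤ)) < -1) := by
    have : (0:ℤ) ≤ (n:ℤ) := Int.natCast_nonneg n
    omega
  rw [genFib, if_neg h0]
  have h1 : ((2*(n:ℤ)) + 1).toNat = 2*n+1 := by omega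
  rw [h1, genFibAux_eq_Tform (2*t) r s hk (2*n+1)]
  unfold Tform
  have key : ∀ m ∈ range (2*n+1+1),
      (if 2*t*m ≤ 2*n+1 then (r:ℤ)^(2*n+1 - 2*t*m) * (s:ℤ)^m * (((2*n+1) - (2*t-1)*m).choose m : ℤ) else 0)
      = ∑ j ∈ range (m+1), (if t*m ≤ n then
          (r:ℤ)^(2*n+1 - 2*t*m) * (s:ℤ)^m * ((n - t*m + j).choose j : ℤ) * ((n - t*m + (m - j)).choose (m-j) : ℤ) else 0) := by
    intro m _
    have a2 : 2*t*m = 2*(t*m) := by ring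
    by_cases h : t*m ≤ n
    · have h2 : 2*t*m ≤ 2*n+1 := by omega
      rw [if_pos h2]
      have e : (2*n+1) - (2*t-1)*m = (n - t*m) + (n - t*m) + m + 1 := by
        have a1 : (2*t-1)*m = 2*t*m - m := by rw [Nat.sub_mul, one_mul]
        have a3 : m ≤ t*m := Nat.le_mul_of_pos_left m (by omega)
        omega
      rw [e, ← vand (n - t*m) (n - t*m) m, Nat.cast_sum, Finset.mul_sum]
      apply Finset.sum_congr rfl
      intro j hj
      rw [if_pos h]
      push_cast
      ring
    · have h2 : ¬ (2*t*m ≤ 2*n+1) := by omega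
      rw [if_neg h2]
      symm
      apply Finset.sum_eq_zero
      intro j hj
      rw [if_neg h]
  rw [Finset.sum_congr rfl key,
    Finset.sum_sigma' (range (2*n+1+1)) (fun m => range (m+1))
      (fun m j => if t*m ≤ n then
          (r:ℤ)^(2*n+1 - 2*t*m) * (s:ℤ)^m * ((n - t*m + j).choose j : ℤ) * ((n - t*m + (m - j)).choose (m-j) : ℤ) else 0),
    ← Finset.sum_filter]
  refine Finset.sum_bij' (fun x _ => (x.2, x.1 - x.2)) (fun p _ => (⟨p.1 + p.2, p.1⟩ : Σ _ : ℕ, ℕ)) ?_ ?_ ?_ ?_ ?_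
  · rintro ⟨m, j⟩ hx
    simp only [Finset.mem_filter, Finset.mem_sigma, Finset.mem_range] at hx
    obtain ⟨⟨hm, hj⟩, hg⟩ := hx
    have hmn : m ≤ n := by
      have : m ≤ t*m := Nat.le_mul_of_pos_left m (by omega)
      omega
    simp only [Finset.mem_filter, Finset.mem_product, Finset.mem_range]
    refine ⟨⟨by omega, by omega⟩, ?_⟩
    simpa [show j + (m - j) = m from by omega] using hg
  · rintro ⟨p1, p2⟩ hp
    simp only [Finset.mem_filter, Finset.mem_product, Finset.mem_range] at hp
    obtain ⟨⟨hp1, hp2⟩, hg⟩ := hp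
    simp only [Finset.mem_filter, Finset.mem_sigma, Finset.mem_range]
    exact ⟨⟨by omega, by omega⟩, hg⟩
  · rintro ⟨m, j⟩ hx
    simp only [Finset.mem_filter, Finset.mem_sigma, Finset.mem_range] at hx
    obtain ⟨⟨hm, hj⟩, hg⟩ := hx
    simp [show j + (m - j) = m from by omega]
  · rintro ⟨p1, p2⟩ hp
    simp
  · rintro ⟨m, j⟩ hx
    simp only [Finset.mem_filter, Finset.mem_sigma, Finset.mem_range] at hx
    obtain ⟨⟨hm, hj⟩, hg⟩ := hx
    have e : j + (m - j) = m := by omega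
    simp only [e, hg, if_true]

end AuxProof
end

section
/- Let i, r be positive integers, let k = 2i, and let n ≥ k-1 be an integer. Then (2 + r²)·F^i_{r,1}(k,n) = F^i_{r,1}(k, n+k) + F^i_{r,1}(k, n-k). -/
/-- For positive integers `i, r`, `k = 2i`, and integer `n ≥ k-1`,
`(2 + r²)·F^i_{r,1}(k,n) = F^i_{r,1}(k, n+k) + F^i_{r,1}(k, n-k)`. -/
theorem genFib_two_plus_r_sq (i r : ℕ) (hi : 0 < i) (hr : 0 < r) (n : ℤ)
    (hn : 2 * (i : ℤ) - 1 ≤ n) :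
    (2 + (r : ℤ) ^ 2) * genFib i (2 * i) r 1 n =
      genFib i (2 * i) r 1 (n + 2 * i) + genFib i (2 * i) r 1 (n - 2 * i) := by
  have key : ∀ m : ℤ, 2 * (i : ℤ) - 1 ≤ m →
      genFib i (2 * i) r 1 m =
        r * genFib i (2 * i) r 1 (m - i) + genFib i (2 * i) r 1 (m - 2 * i) := by
    intro m hm
    have hi' : (1 : ℤ) ≤ i := by exact_mod_cast hi
    unfold genFib
    rw [if_neg (by omega), if_neg (by omega), if_neg (by omega)]
    rw [genFibAux]
    have h1 : max (max (2 * i) i) 1 = 2 * i := by omega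
    have h2 : max i 1 = i := by omega
    have h3 : max (2 * i) 1 = 2 * i := by omega
    rw [h1, h2, h3, if_neg (by omega)]
    have e1 : (m + 1).toNat - i = (m - i + 1).toNat := by omega
    have e2 : (m + 1).toNat - 2 * i = (m - 2 * i + 1).toNat := by omega
    rw [e1, e2]
    ring
  have hi' : (1 : ℤ) ≤ i := by exact_mod_cast hi
  have k1 := key (n + 2 * i) (by omega)
  have k2 := key (n + i) (by omega)
  have k3 := key n hn
  have e1 : n + 2 * i - i = n + i := by ring
  have e2 : n + 2 * i - 2 * i = n := by ring
  have e3 : n + i - i = n := by ring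
  have e4 : n + i - 2 * i = n - i := by ring
  rw [e1, e2] at k1
  rw [e3, e4] at k2
  rw [k1, k2, k3]; ring
end

section
/- Let i, k, m, r, s be positive integers and let n ≥ max{i-k-1, -1} be an integer. Then F^i_{r,s}(k, n+mk) = s^m·F^i_{r,s}(k,n) + ∑_{j=0}^{m-1} r·s^j·F^i_{r,s}(k, n+mk-jk-i). -/
lemma genFib_step (i k r s : ℕ) (hi : 0 < i) (hk : 0 < k) (n : ℤ)
    (hn : max ((i : ℤ) - k - 1) (-1) ≤ n) :
    genFib i k r s (n + k) = s * genFib i k r s n + r * genFib i k r s (n + k - i) := by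
  have hn1 : (-1 : ℤ) ≤ n := le_trans (le_max_right _ _) hn
  have hn2 : (i : ℤ) - k - 1 ≤ n := le_trans (le_max_left _ _) hn
  unfold genFib
  rw [if_neg (by omega), if_neg (by omega), if_neg (by omega)]
  rw [genFibAux]
  rw [if_neg (by omega)]
  have e1 : (n + k + 1).toNat - max i 1 = (n + k - i + 1).toNat := by omega
  have e2 : (n + k + 1).toNat - max k 1 = (n + 1).toNat := by omega
  rw [e1, e2]; ring

/-- For positive integers `i, k, m, r, s` and integer
`n ≥ max{i-k-1, -1}`,
`F^i_{r,s}(k, n+mk) = s^m·F^i_{r,s}(k,n) + ∑_{j=0}^{m-1} r·s^j·F^i_{r,s}(k, n+mk-jk-i)`. -/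
theorem genFib_shift_mk (i k m r s : ℕ) (hi : 0 < i) (hk : 0 < k) (hm : 0 < m)
    (hr : 0 < r) (hs : 0 < s) (n : ℤ) (hn : max ((i : ℤ) - k - 1) (-1) ≤ n) :
    genFib i k r s (n + (m : ℤ) * k) =
      (s : ℤ) ^ m * genFib i k r s n +
        ∑ j ∈ Finset.range m,
          (r : ℤ) * (s : ℤ) ^ j * genFib i k r s (n + (m : ℤ) * k - (j : ℤ) * k - i) := by
  clear hm hr hs
  induction m with
  | zero => simp
  | succ m ih =>
    have hkk : (0:ℤ) ≤ (m : ℤ) * k := by positivity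
    have hstep := genFib_step i k r s hi hk (n + (m : ℤ) * k)
      (le_trans hn (by omega))
    have e1 : n + ((m : ℤ) + 1) * k = n + (m : ℤ) * k + k := by ring
    push_cast
    rw [e1, hstep, ih, Finset.sum_range_succ']
    push_cast
    have e2 : ∀ x ∈ Finset.range m,
        (r : ℤ) * (s : ℤ) ^ (x + 1) *
          genFib i k r s (n + (m:ℤ) * k + k - ((x:ℤ) + 1) * k - i) =
        (s : ℤ) * ((r : ℤ) * (s : ℤ) ^ x *
          genFib i k r s (n + (m:ℤ) * k - (x:ℤ) * k - i)) := by
      intro x _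
      have : n + (m:ℤ) * k + k - ((x:ℤ) + 1) * k - i = n + (m:ℤ) * k - (x:ℤ) * k - i := by
        ring
      rw [this]; ring
    rw [Finset.sum_congr rfl e2, ← Finset.mul_sum]
    have e3 : n + (m:ℤ) * k + k - 0 * k - i = n + (m:ℤ) * k + k - i := by ring
    rw [e3]; ring
end

section
/- Let m ≥ k ≥ 2 and n ≥ 0 be integers and let r, s be positive integers. Then F^1_{r,s}(k, m+n) = F^1_{r,s}(k, m-1)·F^1_{r,s}(k, n) + s·∑_{j=0}^{k-2} F^1_{r,s}(k, m-j-2)·F^1_{r,s}(k, n-k+j+1). -/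
lemma myGenFib_zero (k r s : ℕ) (t : ℤ) (ht : t ≤ -2) : genFib 1 k r s t = 0 := by
  unfold genFib
  rw [if_pos (by omega)]

lemma myGenFib_val (k r s : ℕ) (hk : 2 ≤ k) (t : ℤ) (h1 : -1 ≤ t) (h2 : t ≤ (k:ℤ) - 2) :
    genFib 1 k r s t = (r:ℤ) ^ (t+1).toNat := by
  unfold genFib
  rw [if_neg (by omega), genFibAux, if_pos (by omega), if_pos (by omega)]
  simp

lemma myGenFib_rec (k r s : ℕ) (hk : 2 ≤ k) (t : ℤ) (ht : 0 ≤ t) :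
    genFib 1 k r s t = r * genFib 1 k r s (t-1) + s * genFib 1 k r s (t-(k:ℤ)) := by
  rcases le_or_gt t ((k:ℤ)-2) with h | h
  · rw [myGenFib_val k r s hk t (by omega) h,
      myGenFib_val k r s hk (t-1) (by omega) (by omega),
      myGenFib_zero k r s _ (by omega)]
    rw [show (t+1).toNat = (t-1+1).toNat + 1 from by omega, pow_succ]
    ring
  · unfold genFib
    rw [if_neg (by omega), if_neg (by omega), if_neg (by omega)]
    rw [genFibAux, if_neg (by omega)]
    rw [show (t+1).toNat - max 1 1 = (t-1+1).toNat from by omega,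
      show (t+1).toNat - max k 1 = (t-(k:ℤ)+1).toNat from by omega]

lemma myGenFib_expand (k r s : ℕ) (hk : 2 ≤ k) (n : ℕ) (m : ℤ) (hm : 0 ≤ m) :
    genFib 1 k r s (m + n) = (r:ℤ)^(n+1) * genFib 1 k r s (m-1) +
      s * ∑ t ∈ Finset.range (n+1), (r:ℤ)^t * genFib 1 k r s (m + n - k - t) := by
  induction n with
  | zero => simpa using myGenFib_rec k r s hk m hm
  | succ n ih =>
    have hrec := myGenFib_rec k r s hk (m + n + 1) (by omega)
    rw [show (m + ((n:ℕ)+1 : ℕ) : ℤ) = m + n + 1 from by push_cast; ring]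
    rw [hrec, show (m + (n:ℤ) + 1 - 1) = m + n from by ring, ih]
    rw [Finset.sum_range_succ' (fun t => (r:ℤ)^t * genFib 1 k r s (m + (n:ℤ) + 1 - k - t)) (n+1)]
    have h1 : ∀ i ∈ Finset.range (n+1),
        (r:ℤ)^(i+1) * genFib 1 k r s (m + (n:ℤ) + 1 - k - (i+1:ℕ)) =
        r * ((r:ℤ)^i * genFib 1 k r s (m + (n:ℤ) - k - i)) := by
      intro i _
      rw [show (m + (n:ℤ) + 1 - k - ((i:ℕ)+1:ℕ)) = m + (n:ℤ) - k - i from by push_cast; ring]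
      ring
    rw [Finset.sum_congr rfl h1, ← Finset.mul_sum]
    rw [show (m + (n:ℤ) + 1 - k - ((0:ℕ):ℤ)) = m + n + 1 - k from by push_cast; ring]
    ring

/-- For integers `m ≥ k ≥ 2`, `n ≥ 0` and positive integers `r, s`,
`F^1_{r,s}(k, m+n) = F^1_{r,s}(k, m-1)·F^1_{r,s}(k, n) + s·∑_{j=0}^{k-2} F^1_{r,s}(k, m-j-2)·F^1_{r,s}(k, n-k+j+1)`
(with the convention `F^1_{r,s}(k, n) = 0` for `n ≤ -2`). -/
theorem genFib_breakable (k r s m n : ℕ) (hk : 2 ≤ k) (hm : k ≤ m) (hr : 0 < r)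
    (hs : 0 < s) :
    genFib 1 k r s ((m : ℤ) + n) =
      genFib 1 k r s ((m : ℤ) - 1) * genFib 1 k r s (n : ℤ) +
        s * ∑ j ∈ Finset.range (k - 1),
          genFib 1 k r s ((m : ℤ) - j - 2) *
            genFib 1 k r s ((n : ℤ) - k + j + 1) := by
    induction n using Nat.strong_induction_on with
  | _ n ih =>
  rcases lt_or_ge n (k-1) with hn | hn
  · -- n ≤ k - 2
    have hexp := myGenFib_expand k r s hk n m (by omega)
    have hval : genFib 1 k r s (n : ℤ) = (r:ℤ)^(n+1) := by
      rw [myGenFib_val k r s hk (n:ℤ) (by omega) (by omega),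
        show ((n:ℤ)+1).toNat = n+1 from by omega]
    have hsum : ∑ j ∈ Finset.range (k - 1),
        genFib 1 k r s ((m : ℤ) - j - 2) * genFib 1 k r s ((n : ℤ) - k + j + 1)
        = ∑ t ∈ Finset.range (n+1), (r:ℤ)^t * genFib 1 k r s ((m:ℤ) + n - k - t) := by
      nth_rewrite 1 [Finset.range_eq_Ico]
      rw [
        ← Finset.sum_Ico_consecutive _ (Nat.zero_le (k-1-(n+1))) (by omega : k-1-(n+1) ≤ k-1)]
      have hz : ∑ j ∈ Finset.Ico 0 (k-1-(n+1)),
          genFib 1 k r s ((m : ℤ) - j - 2) * genFib 1 k r s ((n : ℤ) - k + j + 1) = 0 := by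
        apply Finset.sum_eq_zero
        intro j hj
        simp only [Finset.mem_Ico] at hj
        rw [myGenFib_zero k r s ((n : ℤ) - k + j + 1) (by omega)]
        ring
      rw [hz, zero_add, Finset.sum_Ico_eq_sum_range]
      rw [show k - 1 - (k-1-(n+1)) = n + 1 from by omega]
      apply Finset.sum_congr rfl
      intro i hi
      simp only [Finset.mem_range] at hi
      rw [show ((m:ℤ) - ((k-1-(n+1)+i : ℕ) : ℤ) - 2) = (m:ℤ) + n - k - i from by omega,
        show ((n:ℤ) - k + ((k-1-(n+1)+i : ℕ) : ℤ) + 1) = (i:ℤ) - 1 from by omega,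
        myGenFib_val k r s hk ((i:ℤ)-1) (by omega) (by omega),
        show ((i:ℤ)-1+1).toNat = i from by omega]
      ring
    rw [hval, hsum, hexp]
    ring
  rcases eq_or_lt_of_le hn with hn1 | hn1
  · -- n = k - 1
    obtain rfl : n = k - 1 := hn1.symm
    have hexp := myGenFib_expand k r s hk (k-1) m (by omega)
    have hgn : genFib 1 k r s ((k-1 : ℕ) : ℤ) = (r:ℤ)^(k-1+1) + s := by
      rw [myGenFib_rec k r s hk ((k-1 : ℕ) : ℤ) (by omega),
        myGenFib_val k r s hk (((k-1 : ℕ) : ℤ) - 1) (by omega) (by omega),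
        myGenFib_val k r s hk (((k-1 : ℕ) : ℤ) - (k:ℤ)) (by omega) (by omega),
        show (((k-1 : ℕ) : ℤ) - 1 + 1).toNat = k-1+1-1 from by omega,
        show (((k-1 : ℕ) : ℤ) - (k:ℤ) + 1).toNat = 0 from by omega, pow_zero,
        show k-1+1-1 = k-1 from by omega, ← pow_succ']
      ring
    have hs1 : ∀ j ∈ Finset.range (k-1),
        genFib 1 k r s ((m:ℤ) - j - 2) * genFib 1 k r s (((k-1 : ℕ) : ℤ) - k + j + 1)
        = genFib 1 k r s ((m:ℤ) - j - 2) * (r:ℤ)^(j+1) := by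
      intro j hj
      simp only [Finset.mem_range] at hj
      rw [myGenFib_val k r s hk (((k-1 : ℕ) : ℤ) - k + j + 1) (by omega) (by omega),
        show ((((k-1 : ℕ) : ℤ) - k + j + 1) + 1).toNat = j+1 from by omega]
    rw [Finset.sum_congr rfl hs1, hgn, hexp,
      Finset.sum_range_succ' (fun t => (r:ℤ)^t * genFib 1 k r s ((m:ℤ) + ((k-1:ℕ):ℤ) - k - t)) (k-1)]
    have hs3 : ∀ i ∈ Finset.range (k-1),
        (r:ℤ)^(i+1) * genFib 1 k r s ((m:ℤ) + ((k-1:ℕ):ℤ) - k - ((i+1 : ℕ):ℤ))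
        = genFib 1 k r s ((m:ℤ) - i - 2) * (r:ℤ)^(i+1) := by
      intro i _
      rw [show ((m:ℤ) + ((k-1:ℕ):ℤ) - k - ((i+1 : ℕ):ℤ)) = (m:ℤ) - i - 2 from by omega]
      ring
    rw [Finset.sum_congr rfl hs3,
      show ((m:ℤ) + ((k-1:ℕ):ℤ) - k - ((0 : ℕ):ℤ)) = (m:ℤ) - 1 from by omega]
    ring
  · -- n ≥ k
    have hnk : k ≤ n := by omega
    have hA := myGenFib_rec k r s hk ((m:ℤ) + n) (by omega)
    have hB := myGenFib_rec k r s hk ((n:ℤ)) (by omega)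
    have e1 := ih (n-1) (by omega)
    have e2 := ih (n-k) (by omega)
    rw [show ((n-1:ℕ):ℤ) = (n:ℤ) - 1 from by omega] at e1
    rw [show ((n-k:ℕ):ℤ) = (n:ℤ) - k from by omega] at e2
    rw [show (m:ℤ) + ((n:ℤ)-1) = (m:ℤ) + n - 1 from by ring] at e1
    rw [show (m:ℤ) + ((n:ℤ)-(k:ℤ)) = (m:ℤ) + n - k from by ring] at e2
    have key : ∑ j ∈ Finset.range (k - 1),
        genFib 1 k r s ((m : ℤ) - j - 2) * genFib 1 k r s ((n : ℤ) - k + j + 1)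
        = r * ∑ j ∈ Finset.range (k - 1),
            genFib 1 k r s ((m : ℤ) - j - 2) * genFib 1 k r s ((n:ℤ) - 1 - k + j + 1)
          + s * ∑ j ∈ Finset.range (k - 1),
            genFib 1 k r s ((m : ℤ) - j - 2) * genFib 1 k r s ((n:ℤ) - k - k + j + 1) := by
      rw [Finset.mul_sum, Finset.mul_sum, ← Finset.sum_add_distrib]
      apply Finset.sum_congr rfl
      intro j hj
      rw [myGenFib_rec k r s hk ((n : ℤ) - k + j + 1) (by omega)]
      rw [show ((n:ℤ) - k + j + 1 - 1) = (n:ℤ) - 1 - k + j + 1 from by ring,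
        show ((n:ℤ) - k + j + 1 - k) = (n:ℤ) - k - k + j + 1 from by ring]
      ring
    linear_combination hA + (r:ℤ) * e1 + (s:ℤ) * e2 - (s:ℤ) * key
      - genFib 1 k r s ((m:ℤ)-1) * hB
end

section
/- Let k ≥ 2 and 1 ≤ i ≤ k be integers and let r, s be positive integers. Then det Q_k = s·(-1)^{k+1} if i < k, and det Q_k = (s+r)·(-1)^{k+1} if i = k. -/
/-- The matrix `Q_k` (rows/columns indexed by `Fin k`, corresponding to the
1-indexed rows/columns `1, …, k`): entry `1` at `(t, t+1)`; the first column has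
entry `r` in row `i` and entry `s` in row `k` when `i < k`, and entry `r + s` in
row `k` when `i = k`; all other entries vanish. -/
def Qmat (i k r s : ℕ) : Matrix (Fin k) (Fin k) ℤ :=
  Matrix.of fun t j =>
    if (j : ℕ) = (t : ℕ) + 1 then 1
    else if (j : ℕ) = 0 then
      if i = k then (if (t : ℕ) = k - 1 then (r : ℤ) + s else 0)
      else if (t : ℕ) = i - 1 then (r : ℤ)
      else if (t : ℕ) = k - 1 then (s : ℤ)
      else 0
    else 0

/-- The matrix `A_k` of initial conditions: its `(t, j)` entry (1-indexed) is
`F^i_{r,s}(k, 2k-1-t-j)`. -/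
def Amat (i k r s : ℕ) : Matrix (Fin k) (Fin k) ℤ :=
  Matrix.of fun t j =>
    genFib i k r s (2 * (k : ℤ) - 3 - ((t : ℕ) : ℤ) - ((j : ℕ) : ℤ))

lemma det_aux (n : ℕ) (v : Fin (n+1) → ℤ) :
    (Matrix.of fun t j : Fin (n+1) =>
      if (j : ℕ) = (t : ℕ) + 1 then (1:ℤ) else if (j : ℕ) = 0 then v t else 0).det
      = v (Fin.last n) * (-1) ^ n := by
  set σ := finRotate (n+1) with hσ
  set P : Matrix (Fin (n+1)) (Fin (n+1)) ℤ := σ.permMatrix ℤ with hPdef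
  have hP : ∀ t j, P t j = if j = σ t then 1 else 0 := by
    intro t j
    simp [hPdef, Equiv.Perm.permMatrix, PEquiv.toMatrix_apply, Equiv.toPEquiv_apply,
      Option.mem_def, eq_comm]
  have hσapp : ∀ t : Fin (n+1), ((σ t : Fin (n+1)) : ℕ) =
      if t = Fin.last n then 0 else (t : ℕ) + 1 := by
    intro t
    rw [hσ, finRotate_succ_apply, Fin.val_add_one]
  -- the matrix equals P with column 0 replaced by v
  have hM : (Matrix.of fun t j : Fin (n+1) =>
      if (j : ℕ) = (t : ℕ) + 1 then (1:ℤ) else if (j : ℕ) = 0 then v t else 0)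
      = P.updateCol 0 v := by
    ext t j
    rw [Matrix.updateCol_apply, hP, Matrix.of_apply]
    by_cases h0 : j = 0
    · subst h0
      by_cases hl : t = Fin.last n
      · subst hl
        have h1 : ¬ ((0:Fin (n+1)) : ℕ) = (Fin.last n : ℕ) + 1 := by simp [Fin.val_last]
        have h2 : (0 : Fin (n+1)) = σ (Fin.last n) := by
          apply Fin.ext
          rw [hσapp, if_pos rfl]
          rfl
        simp [h1, ← h2]
      · have h1 : ¬ ((0:Fin (n+1)) : ℕ) = (t : ℕ) + 1 := by simp
        have h2 : (0 : Fin (n+1)) ≠ σ t := by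
          intro hc
          have := congrArg Fin.val hc
          rw [hσapp, if_neg hl] at this
          simp at this
        simp [h1, h2]
    · have hjv : (j : ℕ) ≠ 0 := fun h => h0 (Fin.ext h)
      by_cases hl : t = Fin.last n
      · subst hl
        have h1 : ¬ (j : ℕ) = (Fin.last n : ℕ) + 1 := by
          have := j.isLt; simp only [Fin.val_last]; omega
        have h2 : j ≠ σ (Fin.last n) := by
          intro h; apply hjv; rw [h, hσapp]; simp
        have h1' : ¬ (j : ℕ) = n + 1 := by have := j.isLt; omega
        simp [h1', h2, h0, hjv]
      · have hiff : ((j : ℕ) = (t : ℕ) + 1) ↔ j = σ t := by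
          rw [← Fin.val_eq_val, hσapp, if_neg hl]
        have h3 : σ t ≠ 0 := by
          intro hc
          have := congrArg Fin.val hc
          rw [hσapp, if_neg hl] at this
          simp at this
        simp only [hiff]
        by_cases h2 : j = σ t <;> simp [h2, hjv, h3, h0]
  rw [hM]
  -- split v = v(last) • e_last + w
  set e : Fin (n+1) → ℤ := fun t => if t = Fin.last n then 1 else 0 with he
  set w : Fin (n+1) → ℤ := fun t => if t = Fin.last n then 0 else v t with hw
  have hv : v = v (Fin.last n) • e + w := by
    funext t
    by_cases h : t = Fin.last n <;> simp [he, hw, h]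
  have hsplit : P.updateCol 0 v = P.updateCol 0 (v (Fin.last n) • e + w) := by
    rw [← hv]
  rw [hsplit, Matrix.det_updateCol_add, Matrix.det_updateCol_smul]
  have hw0 : (P.updateCol 0 w).det = 0 := by
    apply Matrix.det_eq_zero_of_row_eq_zero (Fin.last n)
    intro j
    rw [Matrix.updateCol_apply]
    by_cases h0 : j = 0
    · simp [h0, hw]
    · rw [if_neg h0, hP, if_neg]
      intro h
      apply h0
      apply Fin.ext
      rw [h, hσapp, if_pos rfl]
      rfl
  have hPe : P.updateCol 0 e = P := by
    have hcol : e = fun t => P t 0 := by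
      funext t
      rw [hP]
      by_cases h : t = Fin.last n
      · subst h
        have h2 : (0 : Fin (n+1)) = σ (Fin.last n) := by
          apply Fin.ext; rw [hσapp, if_pos rfl]; rfl
        rw [if_pos h2]
        simp [he]
      · have h2 : (0 : Fin (n+1)) ≠ σ t := by
          intro hc; have := congrArg Fin.val hc; rw [hσapp, if_neg h] at this; simp at this
        simp [he, h, h2]
    rw [hcol, Matrix.updateCol_eq_self]
  rw [hw0, hPe, add_zero]
  have hsign : P.det = Equiv.Perm.sign σ := Matrix.det_permutation σ
  rw [hsign, hσ, sign_finRotate]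
  push_cast
  ring

/-- For integers `k ≥ 2`, `1 ≤ i ≤ k` and positive integers
`r, s`: `det Q_k = s·(-1)^{k+1}` if `i < k`, and `det Q_k = (s+r)·(-1)^{k+1}` if
`i = k`. -/
theorem Qmat_det (i k r s : ℕ) (hk : 2 ≤ k) (hi : 1 ≤ i) (hik : i ≤ k)
    (hr : 0 < r) (hs : 0 < s) :
    (i < k → (Qmat i k r s).det = (s : ℤ) * (-1) ^ (k + 1)) ∧
    (i = k → (Qmat i k r s).det = ((s : ℤ) + r) * (-1) ^ (k + 1)) := by
  obtain ⟨n, rfl⟩ : ∃ n, k = n + 1 := ⟨k - 1, by omega⟩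
  have hn : 1 ≤ n := by omega
  have hdet := det_aux n (fun t =>
    if i = n + 1 then (if (t : ℕ) = n + 1 - 1 then (r : ℤ) + s else 0)
    else if (t : ℕ) = i - 1 then (r : ℤ)
    else if (t : ℕ) = n + 1 - 1 then (s : ℤ)
    else 0)
  have hQ : (Qmat i (n+1) r s).det =
      (if i = n + 1 then (if ((Fin.last n : Fin (n+1)) : ℕ) = n + 1 - 1 then (r : ℤ) + s else 0)
       else if ((Fin.last n : Fin (n+1)) : ℕ) = i - 1 then (r : ℤ)
       else if ((Fin.last n : Fin (n+1)) : ℕ) = n + 1 - 1 then (s : ℤ)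
       else 0) * (-1) ^ n := hdet
  have hlast : ((Fin.last n : Fin (n+1)) : ℕ) = n := Fin.val_last n
  have hpow : ((-1 : ℤ)) ^ n = (-1) ^ (n + 1 + 1) := by
    rw [pow_succ, pow_succ]; ring
  constructor
  · intro hlt
    have h1 : i ≠ n + 1 := by omega
    have h2 : ¬ n = i - 1 := by omega
    rw [hQ, hlast, if_neg h1, if_neg h2, if_pos (by omega), ← hpow]
  · intro heq
    rw [hQ, hlast, if_pos heq, if_pos (by omega), ← hpow]; ring
end

section
/- Let k ≥ 2 be an integer, let i = 1, and let r, s be positive integers. Then det A_k = s^{k-1}·(-1)^{(k-1)(k+6)/2}. -/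
open Matrix

namespace Matrix

variable {R : Type*}

def hankel (f : ℕ → R) (n : ℕ) : Matrix (Fin n) (Fin n) R :=
  of fun i j => f (i + j)

variable [CommRing R]

theorem det_hankel_succ_eq_det_sub_mul (f : ℕ → R) (c : R) (n : ℕ) :
    (hankel f (n + 1)).det =
      (of fun i : Fin (n + 1) =>
        Fin.cons (f i) fun j : Fin n => f (i + j + 1) - c * f (i + j)).det :=
  det_eq_of_forall_col_eq_smul_add_pred (fun _ => c) (fun _ => rfl) fun i j => by
    simp [hankel, add_assoc]

theorem det_succ_eq_det_submatrix_succ {n : ℕ} (B : Matrix (Fin (n + 1)) (Fin (n + 1)) R)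
    (h00 : B 0 0 = 1) (h0 : ∀ j : Fin n, B 0 j.succ = 0) :
    B.det = (B.submatrix Fin.succ Fin.succ).det := by
  simp [det_succ_row_zero B, Fin.sum_univ_succ, h00, h0]

theorem det_of_eq_zero_above_antidiagonal :
    ∀ {n : ℕ} (N : Matrix (Fin n) (Fin n) R),
      (∀ i j : Fin n, (i : ℕ) + j + 1 < n → N i j = 0) →
        N.det = (-1) ^ (n * (n - 1) / 2) * ∏ i, N i i.rev
  | 0, _, _ => by simp
  | n + 1, N, hN => by
    have hrow : ∀ j : Fin n, N 0 j.castSucc = 0 := fun j => hN _ _ (by simp)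
    have hminor := det_of_eq_zero_above_antidiagonal (N.submatrix Fin.succ Fin.castSucc)
      fun i j hij => hN _ _ (by simp only [Fin.val_succ, Fin.val_castSucc]; omega)
    rw [det_succ_row_zero, Fin.sum_univ_castSucc]
    simp only [hrow, mul_zero, zero_mul, Finset.sum_const_zero, zero_add, Fin.succAbove_last,
      hminor, Fin.prod_univ_succ, Fin.rev_succ, Fin.rev_zero, submatrix_apply, Fin.val_last]
    rw [← Finset.sum_range_id, ← Finset.sum_range_id, Finset.sum_range_succ, pow_add]
    ring

end Matrix

section genFibAux

variable {k : ℕ} (r s : ℕ)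

theorem genFibAux_one_of_lt {m : ℕ} (hm : m < k) : genFibAux 1 k r s m = (r : ℤ) ^ m := by
  rw [genFibAux, if_pos (by omega), if_pos (by omega), Nat.div_one]

theorem genFibAux_one_of_le (hk : 0 < k) {m : ℕ} (hm : k ≤ m) :
    genFibAux 1 k r s m = r * genFibAux 1 k r s (m - 1) + s * genFibAux 1 k r s (m - k) := by
  rw [genFibAux, if_neg (by omega), max_self, max_eq_left hk]

theorem genFibAux_one_succ_sub_mul (hk : 0 < k) {m : ℕ} (hm : m + 1 < 2 * k) :
    genFibAux 1 k r s (m + 1) - r * genFibAux 1 k r s m =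
      if k ≤ m + 1 then (s : ℤ) * (r : ℤ) ^ (m + 1 - k) else 0 := by
  split_ifs with h
  · rw [genFibAux_one_of_le r s hk h, Nat.add_sub_cancel,
      genFibAux_one_of_lt r s (m := m + 1 - k) (by omega)]
    ring
  · rw [genFibAux_one_of_lt r s (by omega : m + 1 < k), genFibAux_one_of_lt r s (by omega : m < k)]
    ring

end genFibAux

theorem Amat_one_submatrix_revPerm (k r s : ℕ) :
    (Amat 1 k r s).submatrix Fin.revPerm Fin.revPerm = hankel (genFibAux 1 k r s) k := by
  ext t j
  simp only [Amat, hankel, genFib, submatrix_apply, of_apply, Fin.revPerm_apply, Fin.val_rev]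
  rw [if_neg (by omega)]
  congr 1
  omega

theorem det_hankel_genFibAux_one (n r s : ℕ) :
    (hankel (genFibAux 1 (n + 1) r s) (n + 1)).det = (-1) ^ (n * (n - 1) / 2) * (s : ℤ) ^ n := by
  set B : Matrix (Fin (n + 1)) (Fin (n + 1)) ℤ := of fun i => Fin.cons (genFibAux 1 (n + 1) r s i)
    fun j : Fin n => genFibAux 1 (n + 1) r s (i + j + 1) - r * genFibAux 1 (n + 1) r s (i + j)
  have hB : ∀ i : Fin (n + 1), ∀ j : Fin n,
      B i j.succ =
        if n + 1 ≤ i + j + 1 then (s : ℤ) * (r : ℤ) ^ ((i : ℕ) + j + 1 - (n + 1)) else 0 :=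
    fun i j => genFibAux_one_succ_sub_mul r s n.succ_pos (by omega)
  rw [det_hankel_succ_eq_det_sub_mul _ (r : ℤ), det_succ_eq_det_submatrix_succ B
    (by simp [B, genFibAux_one_of_lt]) fun j => by rw [hB, if_neg (by rw [Fin.val_zero]; omega)]]
  rw [det_of_eq_zero_above_antidiagonal _ fun i j hij => by
    simp only [submatrix_apply, hB, Fin.val_succ]; rw [if_neg (by omega)]]
  simp only [submatrix_apply, hB, Fin.val_succ, Fin.val_rev]
  rw [Finset.prod_congr rfl fun i _ => if_pos (by omega)]
  simp

theorem Amat_det_general (k r s : ℕ) (hk : 2 ≤ k) :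
    (Amat 1 k r s).det = (s : ℤ) ^ (k - 1) * (-1) ^ ((k - 1) * (k + 6) / 2) := by
  obtain ⟨n, rfl⟩ : ∃ n, k = n + 1 := ⟨k - 1, by omega⟩
  have hexp : n * (n + 7) / 2 = n * (n - 1) / 2 + 2 * (2 * n) := by
    have : n * (n + 7) = n * (n - 1) + 2 * (2 * (2 * n)) := by
      cases n with
      | zero => rfl
      | succ n => rw [Nat.add_sub_cancel]; ring
    omega
  rw [← det_submatrix_equiv_self Fin.revPerm, Amat_one_submatrix_revPerm,
    det_hankel_genFibAux_one, Nat.add_sub_cancel, hexp, pow_add, pow_mul, neg_one_sq, one_pow,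
    mul_one, mul_comm]

/-- For an integer `k ≥ 2`, `i = 1`, and positive integers
`r, s`, `det A_k = s^{k-1}·(-1)^{(k-1)(k+6)/2}`. -/
theorem Amat_det (k r s : ℕ) (hk : 2 ≤ k) (hr : 0 < r) (hs : 0 < s) :
    (Amat 1 k r s).det = (s : ℤ) ^ (k - 1) * (-1) ^ ((k - 1) * (k + 6) / 2) :=
  Amat_det_general k r s hk
end
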